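/- arXiv:2509.22648 — 3 statements merged into one kernel-verified Lean document; each statement's English description precedes it below -/
import Mathlib

section
/- The sequence of quantum integers [1], [3], [5], [1] is Schur log-concave but not strongly Schur log-concave: [3]² − [5][1] and [5]² − [3][1] are non-negative combinations of quantum integers, but [3][5] − [1]² is not. -/
open LaurentPolynomial

/-- The quantum integer `[m] = q^{-m+1} + q^{-m+3} + ⋯ + q^{m-1}` in `ℤ[q,q⁻¹]`. -/
noncomputable def qint (m : ℕ) : LaurentPolynomial ℤ :=
  ∑ t ∈ Finset.range m, T (2 * (t : ℤ) - ((m : ℤ) - 1))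

open Classical in
/-- The quantum binomial `[n choose k] = ([n][n-1]⋯[n-k+1])/([k][k-1]⋯[1])`,
defined as the (unique, when the denominator is nonzero) Laurent polynomial `c` with
`[k]⋯[1] * c = [n]⋯[n-k+1]`. -/
noncomputable def qbinom (n k : ℕ) : LaurentPolynomial ℤ :=
  if h : ∃ c, (∏ t ∈ Finset.range k, qint (t + 1)) * c = ∏ t ∈ Finset.range k, qint (n - t)
  then h.choose else 0
/-- A Laurent polynomial is centred if it is invariant under `q ↦ q⁻¹`. -/
def Centred (f : LaurentPolynomial ℤ) : Prop := ∀ z : ℤ, f.coeff z = f.coeff (-z)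

/-- A Laurent polynomial has non-negative coefficients. -/
def NonnegCoeffs (f : LaurentPolynomial ℤ) : Prop := ∀ z : ℤ, 0 ≤ f.coeff z

/-- A Laurent polynomial is unimodal: its coefficients weakly increase up to some
point and weakly decrease afterwards. -/
def Unimodal (f : LaurentPolynomial ℤ) : Prop :=
  ∃ c : ℤ, (∀ a b : ℤ, a ≤ b → b ≤ c → f.coeff a ≤ f.coeff b) ∧
    (∀ a b : ℤ, c ≤ a → a ≤ b → f.coeff b ≤ f.coeff a)

/-- A Laurent polynomial is a non-negative integer combination of the quantum
integers `[1], [2], [3], …`. -/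
def QPos (f : LaurentPolynomial ℤ) : Prop :=
  ∃ (m : ℕ) (c : ℕ → ℕ), f = ∑ t ∈ Finset.range m, (c t : ℤ) • qint (t + 1)

/-!
By Clebsch–Gordan, `[3]² - [5][1] = [1] + [3]` and `[5]² - [3][1] = [1] + [5] + [7] + [9]`, while
`[3][5] - [1]² = [3] + [5] + [7] - [1]`. Every `[m]` other than `[1]` has equal coefficients at
`q⁰` and `q²`, and `[1]` has the larger one at `q⁰`; so `f.coeff 2 ≤ f.coeff 0` for every Schur
positive `f`. The last difference violates this: its coefficients at `q⁰` and `q²` are `2` and `3`.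
-/

lemma qint_zero : qint 0 = 0 := by
  simp [qint]

lemma qint_one : qint 1 = 1 := by
  simp [qint, T_zero]

lemma qint_add_two (m : ℕ) :
    qint (m + 2) = qint m + T (-((m : ℤ) + 1)) + T ((m : ℤ) + 1) := by
  unfold qint
  rw [Finset.sum_range_succ, Finset.sum_range_succ']
  push_cast
  congr 2
  · exact Finset.sum_congr rfl fun t _ => by ring_nf
  · ring_nf
  · ring_nf

lemma coeff_qint_two {m : ℕ} (hm : m ≠ 1) : (qint m).coeff 2 = (qint m).coeff 0 := by
  induction m using Nat.twoStepInduction with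
  | zero => simp [qint_zero]
  | one => exact absurd rfl hm
  | more n ih _ =>
    rw [qint_add_two]
    simp only [AddMonoidAlgebra.coeff_add, Finsupp.add_apply, T_apply]
    rcases eq_or_ne n 1 with rfl | hn
    · simp [qint_one, ← T_zero]
    · rw [ih hn, if_neg (by omega), if_neg (by omega), if_neg (by omega), if_neg (by omega)]

lemma coeff_qint_two_le_coeff_zero (m : ℕ) : (qint m).coeff 2 ≤ (qint m).coeff 0 := by
  rcases eq_or_ne m 1 with rfl | hm
  · simp [qint_one, ← T_zero]
  · exact (coeff_qint_two hm).le

lemma QPos.coeff_two_le_coeff_zero {f : LaurentPolynomial ℤ} (hf : QPos f) :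
    f.coeff 2 ≤ f.coeff 0 := by
  obtain ⟨m, c, rfl⟩ := hf
  simp only [AddMonoidAlgebra.coeff_sum, Finsupp.finsetSum_apply,
    AddMonoidAlgebra.coeff_smul_apply, smul_eq_mul]
  gcongr with t
  exact coeff_qint_two_le_coeff_zero _

lemma qPos_qint {m : ℕ} (hm : m ≠ 0) : QPos (qint m) := by
  obtain ⟨k, rfl⟩ := Nat.exists_eq_succ_of_ne_zero hm
  refine ⟨k + 1, fun t => if t = k then 1 else 0, ?_⟩
  simp [Finset.sum_ite_eq']

lemma QPos.add {f g : LaurentPolynomial ℤ} (hf : QPos f) (hg : QPos g) : QPos (f + g) := by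
  obtain ⟨m, c, rfl⟩ := hf
  obtain ⟨n, d, rfl⟩ := hg
  have extend : ∀ (k : ℕ) (e : ℕ → ℕ), k ≤ m + n →
      ∑ t ∈ Finset.range k, (e t : ℤ) • qint (t + 1) =
        ∑ t ∈ Finset.range (m + n), ((if t < k then e t else 0 : ℕ) : ℤ) • qint (t + 1) := by
    intro k e hk
    simp only [apply_ite (fun x : ℕ => (x : ℤ)), Nat.cast_zero, ite_smul, zero_smul]
    rw [← Finset.sum_filter]
    refine Finset.sum_congr (Finset.ext fun t => ?_) fun _ _ => rfl
    simp only [Finset.mem_range, Finset.mem_filter]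
    omega
  refine ⟨m + n, fun t => (if t < m then c t else 0) + (if t < n then d t else 0), ?_⟩
  rw [extend m c (by omega), extend n d (by omega), ← Finset.sum_add_distrib]
  simp only [Nat.cast_add, add_smul]

lemma qint_three_sq : qint 3 ^ 2 = qint 1 + qint 3 + qint 5 := by
  simp only [qint, Finset.sum_range_succ, Finset.sum_range_zero]
  norm_num
  simp only [add_mul, mul_add, ← T_add, pow_two, one_mul, mul_one]
  norm_num
  abel

lemma qint_five_sq : qint 5 ^ 2 = qint 1 + qint 3 + qint 5 + qint 7 + qint 9 := by
  simp only [qint, Finset.sum_range_succ, Finset.sum_range_zero]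
  norm_num
  simp only [add_mul, mul_add, ← T_add, pow_two, one_mul, mul_one]
  norm_num
  abel

lemma qint_three_mul_qint_five : qint 3 * qint 5 = qint 3 + qint 5 + qint 7 := by
  simp only [qint, Finset.sum_range_succ, Finset.sum_range_zero]
  norm_num
  simp only [add_mul, mul_add, ← T_add, one_mul, mul_one]
  norm_num
  abel

/-- The sequence `[1], [3], [5], [1]` is Schur log-concave but not strongly Schur
log-concave. -/
theorem qint_1351_weak_not_strong :
    QPos (qint 3 ^ 2 - qint 5 * qint 1) ∧
    QPos (qint 5 ^ 2 - qint 3 * qint 1) ∧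
    ¬ QPos (qint 3 * qint 5 - qint 1 ^ 2) := by
  refine ⟨?_, ?_, fun h => ?_⟩
  · have : qint 3 ^ 2 - qint 5 * qint 1 = qint 1 + qint 3 := by
      rw [qint_three_sq, qint_one, mul_one]; abel
    exact this ▸ (qPos_qint one_ne_zero).add (qPos_qint three_ne_zero)
  · have : qint 5 ^ 2 - qint 3 * qint 1 = qint 1 + qint 5 + qint 7 + qint 9 := by
      rw [qint_five_sq, qint_one, mul_one]; abel
    exact this ▸ (((qPos_qint one_ne_zero).add (qPos_qint (by norm_num))).add
      (qPos_qint (by norm_num))).add (qPos_qint (by norm_num))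
  · have hcoeff := h.coeff_two_le_coeff_zero
    rw [qint_three_mul_qint_five, qint_one, one_pow] at hcoeff
    simp only [AddMonoidAlgebra.coeff_sub, AddMonoidAlgebra.coeff_add, Finsupp.sub_apply,
      Finsupp.add_apply, coeff_qint_two (show 3 ≠ 1 by norm_num),
      coeff_qint_two (show 5 ≠ 1 by norm_num), coeff_qint_two (show 7 ≠ 1 by norm_num),
      ← T_zero, T_apply] at hcoeff
    norm_num at hcoeff
end

section
/- Let μ, ν, ρ, δ be integer vectors (compositions) of length n satisfying μ_i + ν_i = ρ_i + δ_i and ρ_i ≤ μ_i ≤ ν_i ≤ δ_i for all i. Then the partition obtained by sorting the parts of μ and ν together in weakly decreasing order is dominated by the partition obtained by sorting the parts of ρ and δ together: Sort(μ,ν) ⪯ Sort(ρ,δ). -/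
/-- Sort a list of naturals in weakly decreasing order. -/
def sortDesc (l : List ℕ) : List ℕ := l.mergeSort (fun a b => decide (b ≤ a))

lemma le_of_le_cons_of_notMem {s m : Multiset ℕ} {a : ℕ} (h : s ≤ a ::ₘ m) (ha : a ∉ s) :
    s ≤ m := by
  rw [Multiset.le_iff_count] at h ⊢
  intro x
  have hx := h x
  rcases eq_or_ne x a with rfl | hne
  · simp [Multiset.count_eq_zero.mpr ha]
  · simpa [Multiset.count_cons, hne] using hx

lemma split_le_add {s u v : Multiset ℕ} (h : s ≤ u + v) :
    ∃ s1 s2, s1 ≤ u ∧ s2 ≤ v ∧ s = s1 + s2 := by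
  refine ⟨s ∩ u, s - s ∩ u, Multiset.inter_le_right .., ?_, ?_⟩
  · rw [Multiset.le_iff_count]
    intro x
    have hx := Multiset.le_iff_count.mp h x
    simp only [Multiset.count_sub, Multiset.count_inter, Multiset.count_add] at hx ⊢
    omega
  · exact (add_tsub_cancel_of_le (Multiset.inter_le_left ..)).symm

lemma sum_take_le : ∀ (l : List ℕ), List.Pairwise (fun a b : ℕ => b ≤ a) l →
    ∀ (j : ℕ) (s : Multiset ℕ), s ≤ ↑l → Multiset.card s ≤ j →
    s.sum ≤ (l.take j).sum := by
  intro l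
  induction l with
  | nil =>
    intro _ j s hs _
    have : s = 0 := le_antisymm hs (Multiset.zero_le s)
    simp [this]
  | cons a l IH =>
    intro hsort j s hs hcard
    have hal : ∀ x ∈ l, x ≤ a := (List.pairwise_cons.mp hsort).1
    have hsort' := (List.pairwise_cons.mp hsort).2
    by_cases ha : a ∈ s
    · have hs1 : s = a ::ₘ s.erase a := (Multiset.cons_erase ha).symm
      have hse : s.erase a ≤ ↑l := by
        have := Multiset.erase_le_erase a hs
        rwa [show ((a :: l : List ℕ) : Multiset ℕ) = a ::ₘ ↑l from rfl,
          Multiset.erase_cons_head] at this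
      have hcard' : Multiset.card s = Multiset.card (s.erase a) + 1 := by
        rw [hs1]; simp
      obtain ⟨j', rfl⟩ : ∃ j', j = j' + 1 := by
        cases j with
        | zero => omega
        | succ j' => exact ⟨j', rfl⟩
      have := IH hsort' j' (s.erase a) hse (by omega)
      rw [hs1]
      simpa using Nat.add_le_add_left this a
    · have hs' : s ≤ ↑l := le_of_le_cons_of_notMem hs ha
      cases j with
      | zero =>
        have : s = 0 := Multiset.card_eq_zero.mp (Nat.le_zero.mp hcard)
        simp [this]
      | succ j' =>
        have h1 := IH hsort' (j' + 1) s hs' hcard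
        have h2 : (l.take (j' + 1)).sum ≤ a + (l.take j').sum := by
          by_cases hj : j' < l.length
          · rw [List.sum_take_succ l j' hj]
            have := hal l[j'] (List.getElem_mem hj)
            omega
          · rw [List.take_of_length_le (by omega), List.take_of_length_le (by omega)]
            omega
        calc s.sum ≤ (l.take (j' + 1)).sum := h1
          _ ≤ a + (l.take j').sum := h2
          _ = ((a :: l).take (j' + 1)).sum := by simp

lemma key : ∀ (μ ν ρ δ : List ℕ), ν.length = μ.length → ρ.length = μ.length →
    δ.length = μ.length →
    (∀ i, i < μ.length → μ.getD i 0 + ν.getD i 0 = ρ.getD i 0 + δ.getD i 0) →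
    (∀ i, i < μ.length → ρ.getD i 0 ≤ μ.getD i 0 ∧ μ.getD i 0 ≤ ν.getD i 0 ∧
      ν.getD i 0 ≤ δ.getD i 0) →
    ∀ s1 s2 : Multiset ℕ, s1 ≤ ↑μ → s2 ≤ ↑ν →
    ∃ t : Multiset ℕ, t ≤ ↑ρ + ↑δ ∧
      Multiset.card t = Multiset.card s1 + Multiset.card s2 ∧
      s1.sum + s2.sum ≤ t.sum := by
  intro μ
  induction μ with
  | nil =>
    intro ν ρ δ hν hρ hδ _ _ s1 s2 h1 h2
    simp only [List.length_nil] at hν hρ hδ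
    rw [List.length_eq_zero_iff] at hν hρ hδ
    subst hν; subst hρ; subst hδ
    have e1 : s1 = 0 := le_antisymm h1 (Multiset.zero_le _)
    have e2 : s2 = 0 := le_antisymm h2 (Multiset.zero_le _)
    exact ⟨0, by simp, by simp [e1, e2], by simp [e1, e2]⟩
  | cons a μ' IH =>
    intro ν ρ δ hν hρ hδ hsum hchain s1 s2 h1 h2
    obtain ⟨b, ν', rfl⟩ : ∃ b ν', ν = b :: ν' := by
      cases ν with
      | nil => simp at hν
      | cons b ν' => exact ⟨b, ν', rfl⟩
    obtain ⟨c, ρ', rfl⟩ : ∃ c ρ', ρ = c :: ρ' := by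
      cases ρ with
      | nil => simp at hρ
      | cons c ρ' => exact ⟨c, ρ', rfl⟩
    obtain ⟨d, δ', rfl⟩ : ∃ d δ', δ = d :: δ' := by
      cases δ with
      | nil => simp at hδ
      | cons d δ' => exact ⟨d, δ', rfl⟩
    have h0s : a + b = c + d := by simpa using hsum 0 (by simp)
    have h0c : c ≤ a ∧ a ≤ b ∧ b ≤ d := by simpa using hchain 0 (by simp)
    have hsum' : ∀ i, i < μ'.length →
        μ'.getD i 0 + ν'.getD i 0 = ρ'.getD i 0 + δ'.getD i 0 := by
      intro i hi
      simpa using hsum (i + 1) (by simpa using hi)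
    have hchain' : ∀ i, i < μ'.length →
        ρ'.getD i 0 ≤ μ'.getD i 0 ∧ μ'.getD i 0 ≤ ν'.getD i 0 ∧ ν'.getD i 0 ≤ δ'.getD i 0 := by
      intro i hi
      simpa using hchain (i + 1) (by simpa using hi)
    have hν' : ν'.length = μ'.length := by simpa using hν
    have hρ' : ρ'.length = μ'.length := by simpa using hρ
    have hδ' : δ'.length = μ'.length := by simpa using hδ
    have hR : ((c :: ρ' : List ℕ) : Multiset ℕ) + ↑(d :: δ') = c ::ₘ d ::ₘ (↑ρ' + ↑δ') := by
      rw [show ((c :: ρ' : List ℕ) : Multiset ℕ) = c ::ₘ ↑ρ' from rfl,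
        show ((d :: δ' : List ℕ) : Multiset ℕ) = d ::ₘ ↑δ' from rfl,
        Multiset.cons_add, Multiset.add_cons]
    have h1' : s1 ≤ a ::ₘ ↑μ' := h1
    have h2' : s2 ≤ b ::ₘ ↑ν' := h2
    by_cases ha : a ∈ s1 <;> by_cases hb : b ∈ s2
    · have hs1 : s1 = a ::ₘ s1.erase a := (Multiset.cons_erase ha).symm
      have hs2 : s2 = b ::ₘ s2.erase b := (Multiset.cons_erase hb).symm
      have he1 : s1.erase a ≤ ↑μ' := by
        have := Multiset.erase_le_erase a h1'
        rwa [Multiset.erase_cons_head] at this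
      have he2 : s2.erase b ≤ ↑ν' := by
        have := Multiset.erase_le_erase b h2'
        rwa [Multiset.erase_cons_head] at this
      obtain ⟨t', ht'le, ht'card, ht'sum⟩ :=
        IH ν' ρ' δ' hν' hρ' hδ' hsum' hchain' (s1.erase a) (s2.erase b) he1 he2
      refine ⟨c ::ₘ d ::ₘ t', ?_, ?_, ?_⟩
      · rw [hR]
        exact Multiset.cons_le_cons c (Multiset.cons_le_cons d ht'le)
      · rw [hs1, hs2]; simp; omega
      · rw [hs1, hs2]; simp only [Multiset.sum_cons]; omega
    · have he1 : s1.erase a ≤ ↑μ' := by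
        have := Multiset.erase_le_erase a h1'
        rwa [Multiset.erase_cons_head] at this
      have hs1 : s1 = a ::ₘ s1.erase a := (Multiset.cons_erase ha).symm
      have hs2' : s2 ≤ ↑ν' := le_of_le_cons_of_notMem h2' hb
      obtain ⟨t', ht'le, ht'card, ht'sum⟩ :=
        IH ν' ρ' δ' hν' hρ' hδ' hsum' hchain' (s1.erase a) s2 he1 hs2'
      refine ⟨d ::ₘ t', ?_, ?_, ?_⟩
      · rw [hR]
        exact le_trans (Multiset.cons_le_cons d ht'le) (Multiset.le_cons_self _ c)
      · rw [hs1]; simp; omega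
      · rw [hs1]; simp only [Multiset.sum_cons]; omega
    · have he2 : s2.erase b ≤ ↑ν' := by
        have := Multiset.erase_le_erase b h2'
        rwa [Multiset.erase_cons_head] at this
      have hs2 : s2 = b ::ₘ s2.erase b := (Multiset.cons_erase hb).symm
      have hs1' : s1 ≤ ↑μ' := le_of_le_cons_of_notMem h1' ha
      obtain ⟨t', ht'le, ht'card, ht'sum⟩ :=
        IH ν' ρ' δ' hν' hρ' hδ' hsum' hchain' s1 (s2.erase b) hs1' he2
      refine ⟨d ::ₘ t', ?_, ?_, ?_⟩
      · rw [hR]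
        exact le_trans (Multiset.cons_le_cons d ht'le) (Multiset.le_cons_self _ c)
      · rw [hs2]; simp; omega
      · rw [hs2]; simp only [Multiset.sum_cons]; omega
    · have hs1' : s1 ≤ ↑μ' := le_of_le_cons_of_notMem h1' ha
      have hs2' : s2 ≤ ↑ν' := le_of_le_cons_of_notMem h2' hb
      obtain ⟨t', ht'le, ht'card, ht'sum⟩ :=
        IH ν' ρ' δ' hν' hρ' hδ' hsum' hchain' s1 s2 hs1' hs2'
      refine ⟨t', ?_, ht'card, ht'sum⟩
      rw [hR]
      exact le_trans ht'le (le_trans (Multiset.le_cons_self _ d) (Multiset.le_cons_self _ c))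

lemma sortDesc_sorted (l : List ℕ) : List.Pairwise (fun a b : ℕ => b ≤ a) (sortDesc l) := by
  have := List.pairwise_mergeSort (le := fun a b : ℕ => decide (b ≤ a))
    (fun a b c hab hbc => by simp at *; omega)
    (fun a b => by simpa using Nat.le_total b a) l
  exact this.imp (by simp)

/-- If `μ, ν, ρ, δ` are compositions of length `n` with `μᵢ + νᵢ = ρᵢ + δᵢ` and
`ρᵢ ≤ μᵢ ≤ νᵢ ≤ δᵢ` for all `i`, then `Sort(μ,ν)` is dominated by `Sort(ρ,δ)`. -/
theorem sort_dominance (n : ℕ) (μ ν ρ δ : List ℕ)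
    (hμ : μ.length = n) (hν : ν.length = n) (hρ : ρ.length = n) (hδ : δ.length = n)
    (hsum : ∀ i < n, μ.getD i 0 + ν.getD i 0 = ρ.getD i 0 + δ.getD i 0)
    (hchain : ∀ i < n, ρ.getD i 0 ≤ μ.getD i 0 ∧ μ.getD i 0 ≤ ν.getD i 0 ∧
      ν.getD i 0 ≤ δ.getD i 0) :
    ∀ j : ℕ, ((sortDesc (μ ++ ν)).take j).sum ≤ ((sortDesc (ρ ++ δ)).take j).sum := by
  intro j
  set L := sortDesc (μ ++ ν) with hL
  have hperm : L.Perm (μ ++ ν) := List.mergeSort_perm _ _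
  have hsub : (↑(L.take j) : Multiset ℕ) ≤ ↑(μ ++ ν) := by
    calc (↑(L.take j) : Multiset ℕ) ≤ ↑L := (List.take_sublist j L).subperm
      _ = ↑(μ ++ ν) := Multiset.coe_eq_coe.mpr hperm ▸ rfl
  have hsub' : (↑(L.take j) : Multiset ℕ) ≤ ↑μ + ↑ν := hsub
  obtain ⟨s1, s2, hs1, hs2, hsplit⟩ := split_le_add hsub'
  obtain ⟨t, htle, htcard, htsum⟩ := key μ ν ρ δ (by omega) (by omega) (by omega)
    (fun i hi => hsum i (by omega)) (fun i hi => hchain i (by omega)) s1 s2 hs1 hs2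
  have hcardt : Multiset.card t ≤ j := by
    have : Multiset.card s1 + Multiset.card s2 = (L.take j).length := by
      have := congrArg Multiset.card hsplit
      simpa using this.symm
    rw [htcard, this, List.length_take]
    omega
  have htle' : t ≤ ↑(sortDesc (ρ ++ δ)) := by
    have hperm2 : (sortDesc (ρ ++ δ)).Perm (ρ ++ δ) := List.mergeSort_perm _ _
    calc t ≤ ↑ρ + ↑δ := htle
      _ = ↑(ρ ++ δ) := rfl
      _ = ↑(sortDesc (ρ ++ δ)) := (Multiset.coe_eq_coe.mpr hperm2).symm
  have hfinal := sum_take_le (sortDesc (ρ ++ δ)) (sortDesc_sorted _) j t htle' hcardt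
  have hLsum : ((L.take j).sum : ℕ) = s1.sum + s2.sum := by
    have := congrArg Multiset.sum hsplit
    simpa using this
  omega
end

section
/- For all d, n, m ≥ 0 with n ≥ 1, the plethysm of the hook Schur function with s_{(d)} specializes to a product of two quantum binomials: (s_{(n,1^m)} ∘ s_{(d)})(q, q^{−1}) = [n+m−1 choose m]_Q · [n+d choose n+m]_Q. -/
open LaurentPolynomial MvPolynomial

/-- `h_z` in `N` variables over `ℤ`, with `h_z = 0` for `z < 0`. -/
noncomputable def hZ (N : ℕ) (z : ℤ) : MvPolynomial (Fin N) ℤ :=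
  if 0 ≤ z then hsymm (Fin N) ℤ z.toNat else 0

/-- The Schur polynomial in `N` variables over `ℤ`, via the Jacobi–Trudi identity. -/
noncomputable def schur (N : ℕ) (l : List ℕ) : MvPolynomial (Fin N) ℤ :=
  Matrix.det (Matrix.of fun i j : Fin l.length =>
    hZ N ((l.get i : ℤ) - (i : ℤ) + (j : ℤ)))

/-!
The monomials `q^{-d}, q^{-d+2}, …, q^d` specialise `h_r` to the Gaussian binomial
`[d+r choose r]`: splitting off the variable `q^{-d}` gives exactly the q-Pascal rule.
Expanding the Jacobi–Trudi determinant of the hook `(n, 1^m)` along its first column gives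
`D(n, m+1) = h_n · D(1, m) - D(n+1, m)`, and the product formula follows by induction on `m`
from a q-binomial identity, itself a consequence of the two q-Pascal rules and of
`[a choose b+k] [b+k choose k] = [a choose b] [a-b choose k]`. The Gaussian binomials are
defined by the q-Pascal recursion and matched with `qbinom` through
`[k]! · [a choose k] = [a] [a-1] ⋯ [a-k+1]`.
-/

noncomputable def qfactorial (k : ℕ) : LaurentPolynomial ℤ :=
  ∏ t ∈ Finset.range k, qint (t + 1)

noncomputable def qdescFactorial (a b : ℕ) : LaurentPolynomial ℤ :=
  ∏ t ∈ Finset.range b, qint (a - t)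

/-- The Gaussian binomial in the balanced normalisation, invariant under `q ↦ q⁻¹`. -/
noncomputable def qchoose : ℕ → ℕ → LaurentPolynomial ℤ
  | _, 0 => 1
  | 0, _ + 1 => 0
  | a + 1, b + 1 => T ((b : ℤ) - a) * qchoose a b + T ((b : ℤ) + 1) * qchoose a (b + 1)

theorem qint_add (a c : ℕ) : qint (a + c) = T (-c) * qint a + T a * qint c := by
  simp only [qint, Finset.sum_range_add, Finset.mul_sum, ← T_add]
  congr 1 <;> refine Finset.sum_congr rfl fun t _ => ?_ <;> congr 1 <;> push_cast <;> ring

theorem eval₂_qint (m : ℕ) : eval₂ (RingHom.id ℤ) 1 (qint m) = m := by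
  simp [qint]

theorem qint_ne_zero {m : ℕ} (hm : m ≠ 0) : qint m ≠ 0 := fun h => by
  have := eval₂_qint m
  rw [h, map_zero] at this
  omega

theorem qfactorial_ne_zero (k : ℕ) : qfactorial k ≠ 0 :=
  Finset.prod_ne_zero_iff.2 fun t _ => qint_ne_zero t.succ_ne_zero

theorem qfactorial_succ (k : ℕ) : qfactorial (k + 1) = qfactorial k * qint (k + 1) :=
  Finset.prod_range_succ _ _

theorem qdescFactorial_succ (a b : ℕ) :
    qdescFactorial a (b + 1) = qdescFactorial a b * qint (a - b) :=
  Finset.prod_range_succ _ _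

theorem succ_qdescFactorial_succ (a b : ℕ) :
    qdescFactorial (a + 1) (b + 1) = qint (a + 1) * qdescFactorial a b := by
  simp only [qdescFactorial, Finset.prod_range_succ', Nat.add_sub_add_right, Nat.sub_zero]
  ring

theorem qdescFactorial_of_lt {a b : ℕ} (h : a < b) : qdescFactorial a b = 0 :=
  Finset.prod_eq_zero (Finset.mem_range.2 h) (by simp [qint])

theorem qdescFactorial_add (a b k : ℕ) :
    qdescFactorial a (b + k) = qdescFactorial a b * qdescFactorial (a - b) k := by
  simp only [qdescFactorial, Finset.prod_range_add, Nat.sub_sub]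

theorem qdescFactorial_mul_qfactorial (b k : ℕ) :
    qdescFactorial (b + k) b * qfactorial k = qfactorial (b + k) := by
  simp only [qfactorial, qdescFactorial]
  rw [add_comm b k, Finset.prod_range_add, mul_comm]
  congr 1
  rw [← Finset.prod_range_reflect]
  refine Finset.prod_congr rfl fun t ht => ?_
  have := Finset.mem_range.1 ht
  congr 1
  omega

theorem qdescFactorial_self (a : ℕ) : qdescFactorial a a = qfactorial a := by
  simpa [qfactorial] using qdescFactorial_mul_qfactorial a 0

/-- Both q-Pascal rules for `qchoose` come from this, fed with the two splittings of `qint (a + 1)`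
given by `qint_add`. -/
theorem succ_qdescFactorial_succ_of_qint {a b : ℕ} {x y : LaurentPolynomial ℤ}
    (h : b ≤ a → qint (a + 1) = x * qint (b + 1) + y * qint (a - b)) :
    qdescFactorial (a + 1) (b + 1) =
      x * qint (b + 1) * qdescFactorial a b + y * qdescFactorial a (b + 1) := by
  rcases le_or_gt b a with hba | hab
  · rw [succ_qdescFactorial_succ, qdescFactorial_succ, h hba]
    ring
  · simp [qdescFactorial_of_lt, hab, hab.trans (Nat.lt_succ_self b)]

theorem qchoose_zero_right (a : ℕ) : qchoose a 0 = 1 := by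
  cases a <;> rfl

theorem qchoose_succ_succ (a b : ℕ) :
    qchoose (a + 1) (b + 1) =
      T ((b : ℤ) - a) * qchoose a b + T ((b : ℤ) + 1) * qchoose a (b + 1) :=
  rfl

theorem qfactorial_mul_qchoose (a b : ℕ) : qfactorial b * qchoose a b = qdescFactorial a b := by
  induction a generalizing b with
  | zero => cases b <;> simp [qchoose, qfactorial, qdescFactorial, qint]
  | succ a ih =>
    cases b with
    | zero => simp [qchoose_zero_right, qfactorial, qdescFactorial]
    | succ b =>
      rw [succ_qdescFactorial_succ_of_qint (x := T ((b : ℤ) - a)) (y := T ((b : ℤ) + 1)),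
        ← ih, ← ih, qchoose_succ_succ, qfactorial_succ]
      · ring
      · intro hba
        obtain ⟨c, rfl⟩ := Nat.exists_eq_add_of_le hba
        rw [show b + c + 1 = b + 1 + c by ring, qint_add, Nat.add_sub_cancel_left]
        push_cast
        ring_nf

theorem qchoose_eq_of_qfactorial_mul {a b : ℕ} {x : LaurentPolynomial ℤ}
    (h : qfactorial b * x = qdescFactorial a b) : qchoose a b = x :=
  mul_left_cancel₀ (qfactorial_ne_zero b) ((qfactorial_mul_qchoose a b).trans h.symm)

theorem qchoose_self (a : ℕ) : qchoose a a = 1 :=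
  qchoose_eq_of_qfactorial_mul (by rw [mul_one, qdescFactorial_self])

theorem qchoose_succ_succ' (a b : ℕ) :
    qchoose (a + 1) (b + 1) =
      T ((a : ℤ) - b) * qchoose a b + T (-((b : ℤ) + 1)) * qchoose a (b + 1) := by
  refine qchoose_eq_of_qfactorial_mul ?_
  rw [succ_qdescFactorial_succ_of_qint (x := T ((a : ℤ) - b)) (y := T (-((b : ℤ) + 1))),
    ← qfactorial_mul_qchoose, ← qfactorial_mul_qchoose, qfactorial_succ]
  · ring
  · intro hba
    obtain ⟨c, rfl⟩ := Nat.exists_eq_add_of_le hba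
    rw [show b + c + 1 = c + (b + 1) by ring, qint_add, Nat.add_sub_cancel_left]
    push_cast
    ring_nf

theorem qchoose_mul_qchoose (a b k : ℕ) :
    qchoose a (b + k) * qchoose (b + k) k = qchoose a b * qchoose (a - b) k := by
  refine mul_left_cancel₀ (mul_ne_zero (qfactorial_ne_zero b) (qfactorial_ne_zero k)) ?_
  calc qfactorial b * qfactorial k * (qchoose a (b + k) * qchoose (b + k) k)
      = qdescFactorial (k + b) k * qfactorial b * qchoose a (b + k) := by
        rw [← qfactorial_mul_qchoose, add_comm k b]; ring
    _ = qdescFactorial a b * qdescFactorial (a - b) k := by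
        rw [qdescFactorial_mul_qfactorial, add_comm k b, qfactorial_mul_qchoose,
          qdescFactorial_add]
    _ = qfactorial b * qfactorial k * (qchoose a b * qchoose (a - b) k) := by
        rw [← qfactorial_mul_qchoose a b, ← qfactorial_mul_qchoose (a - b) k]; ring

theorem qbinom_eq_qchoose (n k : ℕ) : qbinom n k = qchoose n k := by
  have h : ∃ c, qfactorial k * c = qdescFactorial n k := ⟨_, qfactorial_mul_qchoose n k⟩
  rw [qbinom]
  exact (dif_pos h).trans (qchoose_eq_of_qfactorial_mul h.choose_spec).symm

section CompleteHomogeneous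

variable {σ R S : Type*} [Fintype σ] [DecidableEq σ] [CommSemiring R] [CommSemiring S]
  [Algebra R S]

theorem aeval_hsymm_mul_const (c : S) (x : σ → S) (n : ℕ) :
    aeval (fun i => c * x i) (hsymm σ R n) = c ^ n * aeval x (hsymm σ R n) := by
  simp only [hsymm, map_sum, Finset.mul_sum, map_multiset_prod, Multiset.map_map,
    Function.comp_def, aeval_X, Multiset.prod_map_mul, Multiset.map_const', Multiset.prod_replicate]
  refine Finset.sum_congr rfl fun s _ => ?_
  rw [s.2]

theorem aeval_hsymm_option_succ (x : Option σ → S) (n : ℕ) :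
    aeval x (hsymm (Option σ) R (n + 1)) =
      x none * aeval x (hsymm (Option σ) R n) + aeval (x ∘ some) (hsymm σ R (n + 1)) := by
  rw [hsymm, map_sum, ← Equiv.sum_comp (symOptionSuccEquiv (α := σ) (n := n)).symm,
    Fintype.sum_sum_type]
  simp [symOptionSuccEquiv, hsymm, Finset.mul_sum, map_multiset_prod, Multiset.map_map,
    Function.comp_def, Sym.coe_cons]

end CompleteHomogeneous

theorem aeval_hsymm_qweights (d r : ℕ) :
    aeval (fun t : Fin (d + 1) => T (2 * (t : ℤ) - d)) (hsymm (Fin (d + 1)) ℤ r) =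
      qchoose (d + r) r := by
  induction d generalizing r with
  | zero => simp [hsymm, qchoose_self, map_multiset_prod]
  | succ d ihd =>
    induction r with
    | zero => simp [hsymm_zero, qchoose_zero_right]
    | succ r ihr =>
      set w := fun t : Fin (d + 2) => (T (2 * (t : ℤ) - (d + 1 : ℕ)) : LaurentPolynomial ℤ)
      have hrename (k : ℕ) : aeval w (hsymm (Fin (d + 2)) ℤ k) =
          aeval (w ∘ (finSuccEquiv (d + 1)).symm) (hsymm (Option (Fin (d + 1))) ℤ k) := by
        rw [← rename_hsymm (R := ℤ) (e := (finSuccEquiv (d + 1)).symm), aeval_rename]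
      have hsucc : w ∘ (finSuccEquiv (d + 1)).symm ∘ some =
          fun t : Fin (d + 1) => T 1 * T (2 * (t : ℤ) - d) := by
        ext t
        simp only [w, Function.comp_apply, finSuccEquiv_symm_some, Fin.val_succ, ← T_add]
        push_cast
        ring_nf
      rw [hrename, aeval_hsymm_option_succ, ← hrename, ihr, Function.comp_assoc, hsucc,
        aeval_hsymm_mul_const, ihd, T_pow, show d + 1 + (r + 1) = d + r + 1 + 1 by ring,
        qchoose_succ_succ]
      simp only [w, Function.comp_apply, finSuccEquiv_symm_none, Fin.val_zero]
      push_cast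
      ring_nf

theorem qchoose_hook_identity (d n m : ℕ) :
    qchoose (n + m) (m + 1) * qchoose (n + d) (n + m + 1) +
        qchoose (n + m) m * qchoose (n + d + 1) (n + m + 1) =
      qchoose (n + d) n * qchoose (d + 1) (m + 1) := by
  have hpascal : qchoose (n + m) (m + 1) + T ((n : ℤ) + m + 1) * qchoose (n + m) m =
      T ((m : ℤ) + 1) * qchoose (n + m + 1) (m + 1) := by
    rw [qchoose_succ_succ', mul_add, ← mul_assoc, ← mul_assoc, ← T_add, ← T_add,
      add_neg_cancel, T_zero, one_mul]
    push_cast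
    ring_nf
  have h1 := qchoose_mul_qchoose (n + d) n m
  have h2 := qchoose_mul_qchoose (n + d) n (m + 1)
  rw [Nat.add_sub_cancel_left] at h1 h2
  rw [← add_assoc] at h2
  calc qchoose (n + m) (m + 1) * qchoose (n + d) (n + m + 1) +
        qchoose (n + m) m * qchoose (n + d + 1) (n + m + 1)
      = (qchoose (n + m) (m + 1) + T ((n : ℤ) + m + 1) * qchoose (n + m) m) *
            qchoose (n + d) (n + m + 1) +
          T ((m : ℤ) - d) * (qchoose (n + d) (n + m) * qchoose (n + m) m) := by
        rw [qchoose_succ_succ (n + d) (n + m)]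
        push_cast
        ring_nf
    _ = T ((m : ℤ) + 1) * (qchoose (n + d) (n + m + 1) * qchoose (n + m + 1) (m + 1)) +
          T ((m : ℤ) - d) * (qchoose (n + d) (n + m) * qchoose (n + m) m) := by
        rw [hpascal]
        ring
    _ = qchoose (n + d) n * qchoose (d + 1) (m + 1) := by
        rw [h1, h2, qchoose_succ_succ d m]
        ring

section JacobiTrudi

variable {R : Type*} [CommRing R]

def jacobiTrudi (H : ℤ → R) {k : ℕ} (l : Fin k → ℕ) : Matrix (Fin k) (Fin k) R :=
  Matrix.of fun i j => H ((l i : ℤ) - i + j)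

def hook (n m : ℕ) : Fin (m + 1) → ℕ :=
  Fin.cons n fun _ => 1

theorem schur_hook (N n m : ℕ) :
    schur N (n :: List.replicate m 1) = (jacobiTrudi (hZ N) (hook n m)).det := by
  have hlen : (n :: List.replicate m 1).length = m + 1 := by simp
  rw [schur, ← Matrix.det_submatrix_equiv_self (finCongr hlen.symm)]
  congr 1
  ext i j
  cases i using Fin.cases <;> simp [jacobiTrudi, hook]

theorem det_jacobiTrudi_hook_succ (H : ℤ → R) (h0 : H 0 = 1) (hneg : ∀ z < 0, H z = 0)
    (n m : ℕ) :
    (jacobiTrudi H (hook n (m + 1))).det =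
      H n * (jacobiTrudi H (hook 1 m)).det - (jacobiTrudi H (hook (n + 1) m)).det := by
  have hminor0 : (jacobiTrudi H (hook n (m + 1))).submatrix (Fin.succAbove 0) Fin.succ =
      jacobiTrudi H (hook 1 m) := by
    ext i j
    cases i using Fin.cases <;>
      simp only [jacobiTrudi, hook, Matrix.submatrix_apply, Matrix.of_apply, Fin.succAbove_zero,
        Fin.cons_zero, Fin.cons_succ, Fin.val_succ, Fin.val_zero] <;> push_cast <;> ring_nf
  have hminor1 : (jacobiTrudi H (hook n (m + 1))).submatrix (Fin.succAbove 1) Fin.succ =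
      jacobiTrudi H (hook (n + 1) m) := by
    ext i j
    cases i using Fin.cases <;>
      simp only [jacobiTrudi, hook, Matrix.submatrix_apply, Matrix.of_apply, Fin.one_succAbove_zero,
        Fin.one_succAbove_succ, Fin.cons_zero, Fin.cons_succ, Fin.val_succ, Fin.val_zero] <;>
      push_cast <;> ring_nf
  have hcol (i : Fin m) : jacobiTrudi H (hook n (m + 1)) i.succ.succ 0 = 0 :=
    hneg _ (by simp only [hook, Fin.cons_succ, Fin.val_succ, Fin.val_zero]; push_cast; omega)
  -- Below the first two rows, the first column has entries `H z` with `z < 0`.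
  rw [Matrix.det_succ_column_zero, Fin.sum_univ_succ, Fin.sum_univ_succ, Fin.succ_zero_eq_one,
    hminor0, hminor1]
  simp only [hcol, mul_zero, zero_mul, Finset.sum_const_zero, add_zero]
  simp only [jacobiTrudi, hook, Matrix.of_apply, Fin.cons_zero, Fin.cons_one, Fin.val_zero,
    Fin.val_one, Nat.cast_zero, Nat.cast_one, sub_zero, add_zero, sub_self, h0, pow_zero, pow_one]
  ring

end JacobiTrudi

theorem det_jacobiTrudi_hook_of_qchoose {d : ℕ} {H : ℤ → LaurentPolynomial ℤ}
    (hH : ∀ k : ℕ, H k = qchoose (d + k) k) (hneg : ∀ z < 0, H z = 0) (n m : ℕ) :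
    (jacobiTrudi H (hook n m)).det = qchoose (n + m - 1) m * qchoose (n + d) (n + m) := by
  induction m generalizing n with
  | zero => simp [jacobiTrudi, hook, hH, qchoose_zero_right, add_comm]
  | succ m ih =>
    have h0 : H 0 = 1 := by simpa [qchoose_zero_right] using hH 0
    have hD1 : (jacobiTrudi H (hook 1 m)).det = qchoose (d + 1) (m + 1) := by
      rw [ih, Nat.add_sub_cancel_left, qchoose_self, one_mul, add_comm 1 d, add_comm 1 m]
    have hDsucc : (jacobiTrudi H (hook (n + 1) m)).det =
        qchoose (n + m) m * qchoose (n + d + 1) (n + m + 1) := by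
      rw [ih, Nat.add_right_comm n 1 m, Nat.add_sub_cancel, Nat.add_right_comm n 1 d]
    rw [det_jacobiTrudi_hook_succ H h0 hneg, hD1, hDsucc, hH, add_comm d n,
      ← qchoose_hook_identity, ← add_assoc, Nat.add_sub_cancel]
    ring

theorem hook_plethysm_eq_qbinom_product_general (d n m : ℕ) :
    MvPolynomial.aeval (fun t : Fin (d + 1) => T (2 * (t : ℤ) - (d : ℤ)))
        (schur (d + 1) (n :: List.replicate m 1)) =
      qbinom (n + m - 1) m * qbinom (n + d) (n + m) := by
  set ev : MvPolynomial (Fin (d + 1)) ℤ →ₐ[ℤ] LaurentPolynomial ℤ :=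
    aeval fun t => T (2 * (t : ℤ) - d)
  have hH (k : ℕ) : ev (hZ (d + 1) k) = qchoose (d + k) k := by
    simp [ev, hZ, aeval_hsymm_qweights]
  have hneg (z : ℤ) (hz : z < 0) : ev (hZ (d + 1) z) = 0 := by
    simp [hZ, hz.not_ge]
  rw [schur_hook, AlgHom.map_det, qbinom_eq_qchoose, qbinom_eq_qchoose]
  exact det_jacobiTrudi_hook_of_qchoose (H := ev ∘ hZ (d + 1)) hH hneg n m

/-- The plethysm `(s_{(n,1^m)} ∘ s_{(d)})(q, q⁻¹)`: since
`s_{(d)}(q,q⁻¹) = q^{-d} + q^{-d+2} + ⋯ + q^{d}` is a sum of `d+1` monic monomials,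
it is the hook Schur polynomial in `d+1` variables evaluated at these monomials.
It equals `[n+m−1 choose m] · [n+d choose n+m]`. -/
theorem hook_plethysm_eq_qbinom_product (d n m : ℕ) (hn : 1 ≤ n) :
    MvPolynomial.aeval (fun t : Fin (d + 1) => T (2 * (t : ℤ) - (d : ℤ)))
        (schur (d + 1) (n :: List.replicate m 1)) =
      qbinom (n + m - 1) m * qbinom (n + d) (n + m) :=
  hook_plethysm_eq_qbinom_product_general d n m
end
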